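/- arXiv:2409.06005 — 7 statements merged into one kernel-verified Lean document; each statement's English description precedes it below -/
import Mathlib

section
/- If a subshift X over a finite alphabet contains a non-periodic element, then X contains a non-trivial asymptotic pair, i.e., two distinct elements x, y ∈ X such that x(n) = y(n) for all sufficiently negative n. -/
/-!
Suppose `X` has no non-trivial negatively asymptotic pair, so that the past `(-∞, 0]` of a point
of `X` determines its coordinate at `1`. By compactness of `X × X` a finite window `[-m, 0]`
already does, and by shift invariance the window `[k - m, k]` determines the coordinate `k + 1`;
hence two points of `X` agreeing on a window of length `m + 1` agree from there on. By pigeonhole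
some window pattern `w` occurs in `x` arbitrarily far in the past. If it occurs at `k₂ < k₁`, then
for every `j` choose an occurrence `k ≤ j`: `x` agrees on `[k - m, ∞)` with its shifts by
`k₁ - k` and by `k₂ - k`, which forces `x (j + (k₁ - k₂)) = x j`. So `x` is periodic.
-/

open Set Function

section Sequences

variable {A : Type*}

def window (x : ℤ → A) (m : ℕ) (k : ℤ) : Fin (m + 1) → A := fun i => x (k - i)

theorem eqOn_Icc_shift_of_window_eq {x : ℤ → A} {m : ℕ} {a b : ℤ}
    (h : window x m a = window x m b) :
    EqOn x (fun n => x (n + (b - a))) (Icc (a - m) a) := by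
  intro n hn
  have := congrFun h ⟨(a - n).toNat, by grind⟩
  simp only [window, Int.toNat_of_nonneg (show 0 ≤ a - n by grind)] at this
  calc x n = x (a - (a - n)) := by rw [sub_sub_cancel]
    _ = x (b - (a - n)) := this
    _ = x (n + (b - a)) := by congr 1; ring

theorem exists_window_frequently [Finite A] (x : ℤ → A) (m : ℕ) :
    ∃ w, ∀ B : ℤ, ∃ k ≤ B, window x m k = w := by
  obtain ⟨w, hw⟩ := Finite.exists_infinite_fiber fun t : ℕ => window x m (-t)
  refine ⟨w, fun B => ?_⟩
  obtain ⟨t, ht, hBt⟩ := (Set.infinite_coe_iff.mp hw).exists_gt (-B).toNat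
  exact ⟨-t, by omega, ht⟩

theorem eqOn_Ici_of_eqOn_Icc {u v : ℤ → A} {m : ℕ}
    (hdet : ∀ k, EqOn u v (Icc (k - m) k) → u (k + 1) = v (k + 1))
    {a : ℤ} (h : EqOn u v (Icc (a - m) a)) : EqOn u v (Ici (a - m)) := by
  have hwin : ∀ k, a ≤ k → EqOn u v (Icc (k - m) k) := by
    intro k hk
    induction k, hk using Int.leInduction with
    | base => exact h
    | succ k _ ih =>
      intro n hn
      rcases lt_or_eq_of_le hn.2 with hlt | rfl
      · exact ih ⟨by grind, by omega⟩
      · exact hdet k ih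
  intro n hn
  rcases le_or_gt n a with hle | hgt
  · exact h ⟨hn, hle⟩
  · exact hwin n hgt.le ⟨by grind, le_rfl⟩

theorem exists_periodic_of_window_eq [Finite A] (x : ℤ → A) (m : ℕ)
    (hfwd : ∀ a b, window x m a = window x m b →
      EqOn x (fun n => x (n + (b - a))) (Ici (a - m))) :
    ∃ p : ℕ, 0 < p ∧ Periodic x p := by
  obtain ⟨w, hw⟩ := exists_window_frequently x m
  obtain ⟨k₁, -, hk₁⟩ := hw 0
  obtain ⟨k₂, hk₂₁, hk₂⟩ := hw (k₁ - 1)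
  obtain ⟨p, hp⟩ := Int.eq_ofNat_of_zero_le (by omega : 0 ≤ k₁ - k₂)
  refine ⟨p, by omega, fun j => ?_⟩
  obtain ⟨k, hkj, hk⟩ := hw j
  have h₁ := hfwd k k₁ (hk.trans hk₁.symm)
  have h₂ := hfwd k k₂ (hk.trans hk₂.symm)
  calc x (j + p) = x (j + p + (k₂ - k)) := h₂ (show k - m ≤ j + p by omega)
    _ = x (j + (k₁ - k)) := by congr 1; omega
    _ = x j := (h₁ (show k - m ≤ j by omega)).symm

end Sequences

section Subshifts

variable {A : Type*} {X : Set (ℤ → A)}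

theorem shift_mem_of_forall_succ_pred (hinv : ∀ x ∈ X, (fun j => x (j + 1)) ∈ X)
    (hinv' : ∀ x ∈ X, (fun j => x (j - 1)) ∈ X) (k : ℤ) :
    ∀ x ∈ X, (fun j => x (j + k)) ∈ X := by
  induction k using Int.induction_on with
  | zero => exact fun x hx => by simpa using hx
  | succ k ih =>
    intro x hx
    simpa only [add_assoc, add_comm (1 : ℤ)] using hinv _ (ih x hx)
  | pred k ih =>
    intro x hx
    simpa only [sub_eq_add_neg, add_assoc, add_comm (-1 : ℤ)] using hinv' _ (ih x hx)

theorem exists_window_determines_succ [TopologicalSpace A] [DiscreteTopology A] [Finite A]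
    (hX : IsClosed X) (hpast : ∀ u ∈ X, ∀ v ∈ X, EqOn u v (Iic 0) → u 1 = v 1) :
    ∃ m : ℕ, ∀ u ∈ X, ∀ v ∈ X, EqOn u v (Icc (-m) 0) → u 1 = v 1 := by
  let D : Set ((ℤ → A) × (ℤ → A)) := X ×ˢ X ∩ {p | p.1 1 ≠ p.2 1}
  let U : ℕ → Set ((ℤ → A) × (ℤ → A)) := fun m =>
    ⋃ n ∈ Icc (-m : ℤ) 0, {p | p.1 n ≠ p.2 n}
  have hcoord : ∀ n, Continuous fun p : (ℤ → A) × (ℤ → A) => (p.1 n, p.2 n) :=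
    fun n => by fun_prop
  have hD : IsCompact D :=
    ((hX.prod hX).inter ((isClosed_discrete {q : A × A | q.1 ≠ q.2}).preimage
      (hcoord 1))).isCompact
  have hU : ∀ m, IsOpen (U m) := fun m =>
    isOpen_biUnion fun n _ => (isOpen_discrete {q : A × A | q.1 ≠ q.2}).preimage (hcoord n)
  have hDU : D ⊆ ⋃ m, U m := by
    rintro ⟨u, v⟩ ⟨⟨hu, hv⟩, hne⟩
    obtain ⟨n, hn, hne⟩ : ∃ n ≤ 0, u n ≠ v n := by
      by_contra! h
      exact hne (hpast u hu v hv h)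
    exact mem_iUnion.mpr ⟨(-n).toNat, mem_biUnion (x := n) ⟨by omega, hn⟩ hne⟩
  have hmono : Monotone U := fun m m' hm =>
    biUnion_subset_biUnion_left fun n hn => ⟨by grind, hn.2⟩
  obtain ⟨m, hm⟩ := hD.elim_directed_cover U hU hDU hmono.directed_le
  refine ⟨m, fun u hu v hv huv => ?_⟩
  by_contra hne
  obtain ⟨n, hn, hne'⟩ := mem_iUnion₂.mp (hm (show (u, v) ∈ D from ⟨⟨hu, hv⟩, hne⟩))
  exact hne' (huv hn)

theorem eq_succ_of_eqOn_Icc (hshift : ∀ k : ℤ, ∀ x ∈ X, (fun j => x (j + k)) ∈ X) {m : ℕ}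
    (hm : ∀ u ∈ X, ∀ v ∈ X, EqOn u v (Icc (-m) 0) → u 1 = v 1)
    {u v : ℤ → A} (hu : u ∈ X) (hv : v ∈ X) (k : ℤ) (huv : EqOn u v (Icc (k - m) k)) :
    u (k + 1) = v (k + 1) := by
  have := hm _ (hshift k u hu) _ (hshift k v hv) fun n hn => huv ⟨by grind, by grind⟩
  simpa only [add_comm (1 : ℤ)] using this

end Subshifts

/-- If a subshift over a finite alphabet contains a non-periodic element,
then it contains a non-trivial (negatively) asymptotic pair. -/
theorem subshift_nonperiodic_has_asymptotic_pair
    {A : Type*} [Fintype A] [TopologicalSpace A] [DiscreteTopology A]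
    (X : Set (ℤ → A)) (hclosed : IsClosed X)
    (hinv : ∀ x ∈ X, (fun j => x (j + 1)) ∈ X)
    (hinv' : ∀ x ∈ X, (fun j => x (j - 1)) ∈ X)
    (hnp : ∃ x ∈ X, ¬ ∃ p : ℕ, 0 < p ∧ ∀ j : ℤ, x (j + (p : ℤ)) = x j) :
    ∃ x ∈ X, ∃ y ∈ X, x ≠ y ∧ ∃ N : ℤ, ∀ n : ℤ, n ≤ N → x n = y n := by
  obtain ⟨x, hx, hxnp⟩ := hnp
  by_contra! hcon
  have hpast : ∀ u ∈ X, ∀ v ∈ X, EqOn u v (Iic 0) → u 1 = v 1 := by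
    intro u hu v hv huv
    by_contra hne
    obtain ⟨n, hn, hne'⟩ := hcon u hu v hv (fun h => hne (h ▸ rfl)) 0
    exact hne' (huv hn)
  obtain ⟨m, hm⟩ := exists_window_determines_succ hclosed hpast
  have hshift := shift_mem_of_forall_succ_pred hinv hinv'
  refine hxnp (exists_periodic_of_window_eq x m fun a b hab => ?_)
  exact eqOn_Ici_of_eqOn_Icc (eq_succ_of_eqOn_Icc hshift hm hx (hshift _ x hx))
    (eqOn_Icc_shift_of_window_eq hab)
end

section
/- A non-periodic Toeplitz subshift contains an element that is not a Toeplitz word (a Toeplitz orbital). -/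
open Filter

private lemma uf_const' {β : Type*} (U : Ultrafilter ℕ) {f : ℕ → β} {T : Set β}
    (hT : T.Finite) (h : ∀ s, f s ∈ T) : ∃ a, ∀ᶠ s in (U : Filter ℕ), f s = a := by
  have hmem : T ∈ U.map f := Filter.mem_map.2 (Filter.univ_mem' h)
  obtain ⟨a, -, ha⟩ := Ultrafilter.eq_pure_of_finite_mem hT hmem
  refine ⟨a, ?_⟩
  have h2 : {b | b = a} ∈ U.map f := by
    rw [ha]
    exact Ultrafilter.mem_pure.2 rfl
  exact Filter.mem_map.1 h2

/-- A non-periodic Toeplitz subshift contains an element without the Toeplitz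
property (a Toeplitz orbital). -/
theorem nonperiodic_toeplitz_subshift_has_orbital
    {A : Type*} [Fintype A] [TopologicalSpace A] [DiscreteTopology A]
    (x : ℤ → A)
    (hToeplitz : ∀ j : ℤ, ∃ p : ℕ, 0 < p ∧ ∀ n : ℤ, x (j + n * (p : ℤ)) = x j)
    (hnp : ¬ ∃ p : ℕ, 0 < p ∧ ∀ j : ℤ, x (j + (p : ℤ)) = x j) :
    ∃ y ∈ closure {y : ℤ → A | ∃ n : ℤ, y = fun j => x (j + n)},
      ¬ ∀ j : ℤ, ∃ p : ℕ, 0 < p ∧ ∀ n : ℤ, y (j + n * (p : ℤ)) = y j := by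
  classical
  choose π hπpos hπ using hToeplitz
  -- the period ladder
  set P : ℕ → ℤ := fun t =>
    (Nat.factorial t : ℤ) * ∏ j ∈ Finset.Icc (-(t : ℤ)) (t : ℤ), (π j : ℤ) with hPdef
  have hPpos : ∀ t, 0 < P t := by
    intro t
    refine mul_pos (by positivity) (Finset.prod_pos fun i _ => ?_)
    exact_mod_cast hπpos i
  have hdvd_pi : ∀ (t : ℕ) (j : ℤ), -(t : ℤ) ≤ j → j ≤ (t : ℤ) → (π j : ℤ) ∣ P t := by
    intro t j h1 h2
    exact Dvd.dvd.mul_left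
      (Finset.dvd_prod_of_mem _ (Finset.mem_Icc.2 ⟨h1, h2⟩)) _
  have hmono : ∀ t s : ℕ, t ≤ s → P t ∣ P s := by
    intro t s hts
    refine mul_dvd_mul ?_ (Finset.prod_dvd_prod_of_subset _ _ _ ?_)
    · exact_mod_cast Nat.factorial_dvd_factorial hts
    · exact Finset.Icc_subset_Icc (by exact_mod_cast neg_le_neg (Int.ofNat_le.2 hts))
        (by exact_mod_cast hts)
  -- positions in [-t, t] are P t - periodic
  have hperP : ∀ (t : ℕ) (j : ℤ), -(t : ℤ) ≤ j → j ≤ (t : ℤ) →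
      ∀ m : ℤ, P t ∣ m → x (j + m) = x j := by
    intro t j h1 h2 m hm
    obtain ⟨e, he⟩ := hdvd_pi t j h1 h2
    obtain ⟨k, hk⟩ := hm
    have : j + m = j + (e * k) * (π j : ℤ) := by rw [hk, he]; ring
    rw [this]
    exact hπ j (e * k)
  -- aperiodic points at each level
  push_neg at hnp
  have hj' : ∀ t : ℕ, ∃ j : ℤ, x (j + P t) ≠ x j := by
    intro t
    obtain ⟨j, hj⟩ := hnp (P t).toNat (by have := hPpos t; omega)
    refine ⟨j, ?_⟩
    rwa [Int.toNat_of_nonneg (hPpos t).le] at hj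
  choose j hjx using hj'
  -- ultrafilter extending atTop
  obtain ⟨U, hU⟩ := Ultrafilter.exists_le (atTop : Filter ℕ)
  have hYex : ∀ (c : ℕ → ℤ) (i : ℤ), ∃ a : A, ∀ᶠ s in (U : Filter ℕ), x (c s + i) = a := by
    intro c i
    exact uf_const' U Set.finite_univ fun _ => Set.mem_univ _
  choose y hy using fun i : ℤ => hYex (fun s => j s) i
  choose y' hy' using fun i : ℤ => hYex (fun s => j s + P s) i
  have huniq : ∀ {a b : A} {f : ℕ → A},
      (∀ᶠ s in (U : Filter ℕ), f s = a) → (∀ᶠ s in (U : Filter ℕ), f s = b) → a = b := by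
    intro a b f h1 h2
    obtain ⟨s, hs1, hs2⟩ := (h1.and h2).exists
    rw [← hs1, ← hs2]
  -- both limits lie in the orbit closure
  have hcl : ∀ (c : ℕ → ℤ) (yy : ℤ → A),
      (∀ i : ℤ, ∀ᶠ s in (U : Filter ℕ), x (c s + i) = yy i) →
      yy ∈ closure {y : ℤ → A | ∃ n : ℤ, y = fun j => x (j + n)} := by
    intro c yy h
    refine mem_closure_of_tendsto (b := (U : Filter ℕ)) (f := fun s => (fun i => x (i + c s))) ?_ ?_
    · refine tendsto_pi_nhds.2 fun i => ?_
      rw [nhds_discrete]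
      refine tendsto_pure.2 ((h i).mono fun s hs => ?_)
      rw [add_comm]; exact hs
    · exact Eventually.of_forall fun s => ⟨c s, rfl⟩
  -- the two limits differ at coordinate 0
  have hne : y 0 ≠ y' 0 := by
    intro hEq
    obtain ⟨s, hs1, hs2⟩ := ((hy 0).and (hy' 0)).exists
    apply hjx s
    rw [add_zero] at hs1 hs2
    rw [hs2, ← hEq, ← hs1]
  -- conclude by contradiction
  by_contra hcon
  push_neg at hcon
  obtain ⟨p, hp0, hp⟩ := hcon y (hcl _ _ hy) 0
  obtain ⟨p', hp'0, hp'⟩ := hcon y' (hcl _ _ hy') 0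
  set t : ℕ := p * p' with htdef
  have ht0 : 0 < t := Nat.mul_pos hp0 hp'0
  -- the common residue of the j s modulo P t
  obtain ⟨r, hr⟩ := uf_const' U (f := fun s => j s % P t)
    (Set.finite_Icc (0 : ℤ) (P t)) (fun s => by
      constructor
      · exact Int.emod_nonneg _ (hPpos t).ne'
      · exact (Int.emod_lt_of_pos _ (hPpos t)).le)
  set w : ℤ := r % (t : ℤ) with hwdef
  have htZ : (0 : ℤ) < (t : ℤ) := by exact_mod_cast ht0
  have hw0 : 0 ≤ w := Int.emod_nonneg _ htZ.ne'
  have hwt : w < (t : ℤ) := Int.emod_lt_of_pos _ htZ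
  have hb1 : -(t : ℤ) ≤ w := by omega
  have hb2 : w ≤ (t : ℤ) := hwt.le
  have hLwr : (t : ℤ) ∣ (w - r) := ⟨-(r / (t : ℤ)), by rw [hwdef, Int.emod_def]; ring⟩
  -- key: along the ultrafilter both sequences take the value x w at coordinate w - r
  have hts : ∀ᶠ s in (U : Filter ℕ), t ≤ s := hU (eventually_ge_atTop t)
  have hkey1 : ∀ᶠ s in (U : Filter ℕ), x (j s + (w - r)) = x w := by
    filter_upwards [hr] with s hrs
    have hd : P t ∣ (j s - r) := ⟨j s / P t, by rw [← hrs, Int.emod_def]; ring⟩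
    have harg : j s + (w - r) = w + (j s - r) := by ring
    rw [harg]
    exact hperP t w hb1 hb2 _ hd
  have hkey2 : ∀ᶠ s in (U : Filter ℕ), x (j s + P s + (w - r)) = x w := by
    filter_upwards [hr, hts] with s hrs hts'
    have hd : P t ∣ (j s - r) := ⟨j s / P t, by rw [← hrs, Int.emod_def]; ring⟩
    have hd2 : P t ∣ ((j s - r) + P s) := dvd_add hd (hmono t s hts')
    have harg : j s + P s + (w - r) = w + ((j s - r) + P s) := by ring
    rw [harg]
    exact hperP t w hb1 hb2 _ hd2
  have hyv : y (w - r) = x w := huniq (hy (w - r)) hkey1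
  have hy'v : y' (w - r) = x w := huniq (hy' (w - r)) hkey2
  -- w - r is a multiple of both p and p'
  have hq : ((w - r) / (t : ℤ)) * (t : ℤ) = w - r := Int.ediv_mul_cancel hLwr
  have hcast : ((t : ℕ) : ℤ) = (p : ℤ) * (p' : ℤ) := by rw [htdef]; push_cast; ring
  have harg1 : (0 : ℤ) + (((w - r) / (t : ℤ)) * (p' : ℤ)) * (p : ℤ) = w - r := by
    rw [zero_add]
    calc ((w - r) / (t : ℤ)) * (p' : ℤ) * (p : ℤ)
        = ((w - r) / (t : ℤ)) * ((p : ℤ) * (p' : ℤ)) := by ring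
      _ = ((w - r) / (t : ℤ)) * (t : ℤ) := by rw [hcast]
      _ = w - r := hq
  have harg2 : (0 : ℤ) + (((w - r) / (t : ℤ)) * (p : ℤ)) * (p' : ℤ) = w - r := by
    rw [zero_add]
    calc ((w - r) / (t : ℤ)) * (p : ℤ) * (p' : ℤ)
        = ((w - r) / (t : ℤ)) * ((p : ℤ) * (p' : ℤ)) := by ring
      _ = ((w - r) / (t : ℤ)) * (t : ℤ) := by rw [hcast]
      _ = w - r := hq
  have h1 := hp (((w - r) / (t : ℤ)) * (p' : ℤ))
  have h2 := hp' (((w - r) / (t : ℤ)) * (p : ℤ))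
  rw [harg1] at h1
  rw [harg2] at h2
  apply hne
  rw [← h1, ← h2, hyv, hy'v]
end

section
/- Let x be a Toeplitz word with period structure (p_l) and suppose there exists h ∈ ℕ such that |Aper(p_l, x) ∩ [0, p_l − 1]| ≤ h for all l. Then the boundary B_X of the separating cover generating X_x satisfies |B_X| ≤ h. (Concretely: B_X is contained, for every l, in a union of at most h cylinder sets of level l, and these cylinders shrink to points.) -/
/-- If the number of p_l-holes per period of a Toeplitz word is at most h for all l,
then the boundary of the separating cover (characterized by the property that all its
coordinates are hole positions) has at most h elements. -/
theorem boundary_card_le_of_bounded_holes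
    {A : Type*} [Fintype A] (x : ℤ → A) (p : ℕ → ℕ)
    (hpos : ∀ l, 0 < p l) (hdvd : ∀ l, p l ∣ p (l + 1)) (h : ℕ)
    (hholes : ∀ l, ({j : ℤ | ¬ ∀ n : ℤ, x (j + n * (p l : ℤ)) = x j} ∩
      Set.Ico (0 : ℤ) (p l : ℤ)).ncard ≤ h)
    (B : Set {ω : ℕ → ℤ // ∀ l, 0 ≤ ω l ∧ ω l < (p l : ℤ) ∧ ω (l + 1) % (p l : ℤ) = ω l})
    (hB : ∀ ω ∈ B, ∀ l, ¬ ∀ n : ℤ, x (ω.1 l + n * (p l : ℤ)) = x (ω.1 l)) :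
    B.Finite ∧ B.ncard ≤ h := by
  classical
  -- if two points differ at level l, they differ at all higher levels
  have persist : ∀ (ω ω' : {ω : ℕ → ℤ // ∀ l, 0 ≤ ω l ∧ ω l < (p l : ℤ) ∧ ω (l + 1) % (p l : ℤ) = ω l}) (l m : ℕ), l ≤ m → ω.1 l ≠ ω'.1 l → ω.1 m ≠ ω'.1 m := by
    intro ω ω' l m hlm hne
    induction m, hlm using Nat.le_induction with
    | base => exact hne
    | succ m hm ih =>
      intro heq
      apply ih
      have h1 := (ω.2 m).2.2
      have h2 := (ω'.2 m).2.2
      rw [← h1, ← h2, heq]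
  -- key: any finite subset of B has at most h elements
  have key : ∀ t : Finset {ω : ℕ → ℤ // ∀ l, 0 ≤ ω l ∧ ω l < (p l : ℤ) ∧ ω (l + 1) % (p l : ℤ) = ω l}, ↑t ⊆ B → t.card ≤ h := by
    intro t ht
    have hc : ∀ q : {ω : ℕ → ℤ // ∀ l, 0 ≤ ω l ∧ ω l < (p l : ℤ) ∧ ω (l + 1) % (p l : ℤ) = ω l} × {ω : ℕ → ℤ // ∀ l, 0 ≤ ω l ∧ ω l < (p l : ℤ) ∧ ω (l + 1) % (p l : ℤ) = ω l}, ∃ l, q.1 ≠ q.2 → q.1.1 l ≠ q.2.1 l := by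
      intro q
      by_cases hq : q.1 = q.2
      · exact ⟨0, fun hcon => absurd hq hcon⟩
      · obtain ⟨l, hl⟩ := Function.ne_iff.mp (fun he => hq (Subtype.ext he))
        exact ⟨l, fun _ => hl⟩
    choose c hcspec using hc
    set L := (t ×ˢ t).sup c with hL
    have hinj : Set.InjOn (fun ω : {ω : ℕ → ℤ // ∀ l, 0 ≤ ω l ∧ ω l < (p l : ℤ) ∧ ω (l + 1) % (p l : ℤ) = ω l} => ω.1 L) ↑t := by
      intro a ha b hb hab
      by_contra hne
      have hle : c (a, b) ≤ L :=
        Finset.le_sup (Finset.mem_product.mpr ⟨Finset.mem_coe.mp ha, Finset.mem_coe.mp hb⟩)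
      exact persist a b _ L hle (hcspec (a, b) hne) hab
    have hmap : ↑(t.image (fun ω : {ω : ℕ → ℤ // ∀ l, 0 ≤ ω l ∧ ω l < (p l : ℤ) ∧ ω (l + 1) % (p l : ℤ) = ω l} => ω.1 L)) ⊆
        ({j : ℤ | ¬ ∀ n : ℤ, x (j + n * (p L : ℤ)) = x j} ∩ Set.Ico (0 : ℤ) (p L : ℤ)) := by
      intro j hj
      rw [Finset.coe_image] at hj
      obtain ⟨ω, hω, rfl⟩ := hj
      exact ⟨hB ω (ht hω) L, (ω.2 L).1, (ω.2 L).2.1⟩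
    have hfinS : ({j : ℤ | ¬ ∀ n : ℤ, x (j + n * (p L : ℤ)) = x j} ∩
        Set.Ico (0 : ℤ) (p L : ℤ)).Finite :=
      Set.Finite.inter_of_right (Set.finite_Ico _ _) _
    calc t.card = (t.image (fun ω : {ω : ℕ → ℤ // ∀ l, 0 ≤ ω l ∧ ω l < (p l : ℤ) ∧ ω (l + 1) % (p l : ℤ) = ω l} => ω.1 L)).card :=
          (Finset.card_image_of_injOn hinj).symm
      _ ≤ h := by
          refine le_trans ?_ (hholes L)
          rw [← Set.ncard_coe_finset]
          exact Set.ncard_le_ncard hmap hfinS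
  have hfin : B.Finite := by
    by_contra hinf
    have hinf' : B.Infinite := hinf
    obtain ⟨s, hsub, hcard⟩ := hinf'.exists_subset_card_eq (h + 1)
    have := key s hsub
    omega
  refine ⟨hfin, ?_⟩
  rw [Set.ncard_eq_toFinset_card B hfin]
  exact key hfin.toFinset (by simp)
end

section
/- Let x ∈ A^ℤ be a non-periodic Toeplitz word with period structure (p_l). For every l₁ ∈ ℕ there exists l₂ ∈ ℕ such that whenever x[j₁, j₁ + p_{l₂} − 1] = x[j₂, j₂ + p_{l₂} − 1] (the two finite subwords of length p_{l₂} coincide), then j₁ ≡ j₂ (mod p_{l₁}). That is, every sufficiently long word occurs in x only in a single residue class modulo p_{l₁}. -/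
/-!
Let `P = p l₁`. A residue class modulo `P` that is not contained in `Per(P, x)` contains two
positions with different letters, and both are `p m`-periodic for some `m`; hence every
progression of step `P` and length `p m / P` inside that class already sees two different letters.
Taking `m = M` large enough for all `P` classes at once, a window of length `p M` decides which of
its positions lie in `Per(P, x)`. So if the words of length `p M` at `j₁` and `j₂` agree,
translation by `±(j₁ - j₂)` preserves `Per(P, x)` and `x` on it; then so does translation by
`g = gcd(j₁ - j₂, P)`, which gives `Per(P, x) = Per(g, x)`, and essentiality of `P` forces `g = P`.
-/

open Filter

namespace Toeplitz

variable {A : Type*}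

def perSet (x : ℤ → A) (q : ℤ) : Set ℤ := {j | ∀ n : ℤ, x (j + n * q) = x j}

def IsRecognitionWindow (x : ℤ → A) (P W : ℤ) : Prop :=
  ∀ c, (∀ n : ℤ, 0 ≤ n → (n + 1) * P ≤ W → x (c + n * P) = x c) → c ∈ perSet x P

def IsPeriodOn (x : ℤ → A) (S : Set ℤ) (d : ℤ) : Prop := ∀ j ∈ S, j + d ∈ S ∧ x (j + d) = x j

variable {x : ℤ → A}

theorem add_mul_mem_perSet {q j : ℤ} (hj : j ∈ perSet x q) (t : ℤ) :
    j + t * q ∈ perSet x q := by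
  intro n
  rw [add_assoc, ← add_mul, hj, hj]

theorem perSet_subset_of_dvd {q q' : ℤ} (h : q ∣ q') : perSet x q ⊆ perSet x q' := by
  obtain ⟨k, rfl⟩ := h
  intro j hj n
  convert hj (n * k) using 3
  ring

section IsPeriodOn

variable {S : Set ℤ} {d : ℤ}

theorem IsPeriodOn.add {e : ℤ} (hd : IsPeriodOn x S d) (he : IsPeriodOn x S e) :
    IsPeriodOn x S (d + e) := fun j hj =>
  let ⟨hjd, hxd⟩ := hd j hj
  let ⟨hjde, hxde⟩ := he _ hjd
  ⟨by rwa [← add_assoc], by rw [← add_assoc, hxde, hxd]⟩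

theorem IsPeriodOn.mul (hd : IsPeriodOn x S d) (hnd : IsPeriodOn x S (-d)) (u : ℤ) :
    IsPeriodOn x S (u * d) := by
  induction u using Int.induction_on with
  | zero => intro j hj; simp [hj]
  | succ u ih => rw [add_mul, one_mul]; exact ih.add hd
  | pred u ih => rw [sub_mul, one_mul, sub_eq_add_neg]; exact ih.add hnd

theorem perSet_subset_perSet_gcd {P : ℤ} (hd : IsPeriodOn x (perSet x P) d)
    (hnd : IsPeriodOn x (perSet x P) (-d)) : perSet x P ⊆ perSet x (Int.gcd d P) := by
  intro j hj n
  have hbezout : n * (Int.gcd d P : ℤ) = (n * d.gcdA P) * d + (n * d.gcdB P) * P := by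
    rw [Int.gcd_eq_gcd_ab]; ring
  obtain ⟨hjd, hxd⟩ := hd.mul hnd (n * d.gcdA P) j hj
  rw [hbezout, ← add_assoc, hjd, hxd]

theorem dvd_of_isPeriodOn_perSet {P : ℕ} (hP : 0 < P)
    (hess : ∀ q : ℕ, 0 < q → q < P → perSet x P ≠ perSet x q)
    (hd : IsPeriodOn x (perSet x P) d) (hnd : IsPeriodOn x (perSet x P) (-d)) :
    (P : ℤ) ∣ d := by
  by_contra hPd
  have hgP : (Int.gcd d P : ℤ) ∣ P := Int.gcd_dvd_right d P
  have hg_pos : 0 < Int.gcd d P := Int.gcd_pos_of_ne_zero_right d (by exact_mod_cast hP.ne')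
  have hg_lt : Int.gcd d P < P := by
    refine lt_of_le_of_ne (Nat.le_of_dvd hP (Int.natCast_dvd_natCast.mp hgP)) fun h => hPd ?_
    exact h ▸ Int.gcd_dvd_left d P
  exact hess _ hg_pos hg_lt
    ((perSet_subset_perSet_gcd hd hnd).antisymm (perSet_subset_of_dvd hgP))

end IsPeriodOn

theorem exists_apply_add_mul_eq {P Q j c : ℤ} (hQ : 0 < Q) (hj : j ∈ perSet x (Q * P))
    (hc : P ∣ c - j) : ∃ n, 0 ≤ n ∧ n < Q ∧ x (c + n * P) = x j := by
  obtain ⟨s, hs⟩ := hc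
  refine ⟨-s % Q, Int.emod_nonneg _ hQ.ne', Int.emod_lt_of_pos _ hQ, ?_⟩
  have hshift : c + (-s % Q) * P = j + (-(-s / Q)) * (Q * P) := by
    linear_combination hs + P * Int.emod_def (-s) Q
  rw [hshift, hj]

theorem exists_apply_add_mul_ne {P Q j j' c : ℤ} (hQ : 0 < Q) (hj : j ∈ perSet x (Q * P))
    (hj' : j' ∈ perSet x (Q * P)) (hjj' : P ∣ j' - j) (hne : x j' ≠ x j) (hc : P ∣ c - j) :
    ∃ n, 0 ≤ n ∧ n < Q ∧ x (c + n * P) ≠ x c := by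
  obtain ⟨n, hn0, hnQ, hn⟩ := exists_apply_add_mul_eq hQ hj hc
  obtain ⟨n', hn0', hnQ', hn'⟩ := exists_apply_add_mul_eq hQ hj'
    (by simpa only [sub_sub_sub_cancel_right] using dvd_sub hc hjj')
  by_cases h : x (c + n * P) = x c
  · exact ⟨n', hn0', hnQ', by rwa [hn', ← h, hn]⟩
  · exact ⟨n, hn0, hnQ, h⟩

theorem IsRecognitionWindow.isPeriodOn_sub {P W a b : ℤ} (hW : IsRecognitionWindow x P W)
    (hP : 0 < P) (hPW : P ≤ W)
    (hab : ∀ i, 0 ≤ i → i < W → x (a + i) = x (b + i)) :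
    IsPeriodOn x (perSet x P) (a - b) := by
  intro j hj
  obtain ⟨i, k, hi0, hiP, rfl⟩ : ∃ i k, 0 ≤ i ∧ i < P ∧ j = b + i + k * P :=
    ⟨(j - b) % P, (j - b) / P, Int.emod_nonneg _ hP.ne', Int.emod_lt_of_pos _ hP,
      by rw [Int.emod_def]; ring⟩
  have hbi : b + i ∈ perSet x P := by
    convert add_mul_mem_perSet hj (-k) using 1; ring
  have hi : x (a + i) = x (b + i) := hab i hi0 (by linarith)
  have hai : a + i ∈ perSet x P := by
    refine hW _ fun n hn hnW => ?_
    calc x (a + i + n * P) = x (b + i + n * P) := by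
          simpa only [add_assoc] using hab _ (by positivity) (by linarith)
      _ = x (a + i) := by rw [hbi n, hi]
  rw [show b + i + k * P + (a - b) = a + i + k * P by ring]
  exact ⟨add_mul_mem_perSet hai k, by rw [hai k, hbi k, hi]⟩

variable {p : ℕ → ℕ}

theorem eventually_mem_perSet (hdvd : ∀ l, p l ∣ p (l + 1))
    (hcover : ∀ j : ℤ, ∃ l, j ∈ perSet x (p l)) (j : ℤ) :
    ∀ᶠ m in atTop, j ∈ perSet x (p m) := by
  obtain ⟨l, hl⟩ := hcover j
  filter_upwards [eventually_ge_atTop l] with m hm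
  exact perSet_subset_of_dvd
    (Int.natCast_dvd_natCast.mpr (Nat.rel_of_forall_rel_succ_of_le _ hdvd hm)) hl

theorem eventually_exists_apply_add_mul_ne (hpos : ∀ l, 0 < p l)
    (hdvd : ∀ l, p l ∣ p (l + 1)) (hcover : ∀ j : ℤ, ∃ l, j ∈ perSet x (p l)) {l : ℕ} {j : ℤ}
    (hj : j ∉ perSet x (p l)) :
    ∀ᶠ m in atTop, ∀ c, (p l : ℤ) ∣ c - j →
      ∃ n : ℤ, 0 ≤ n ∧ (n + 1) * p l ≤ (p m : ℤ) ∧ x (c + n * p l) ≠ x c := by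
  obtain ⟨k, hk⟩ : ∃ k : ℤ, x (j + k * p l) ≠ x j := by simpa [perSet] using hj
  filter_upwards [eventually_mem_perSet hdvd hcover j,
    eventually_mem_perSet hdvd hcover (j + k * p l), eventually_ge_atTop l]
    with m hjm hkm hlm c hc
  obtain ⟨Q, hQ⟩ := Nat.rel_of_forall_rel_succ_of_le _ hdvd hlm
  have hQP : (p m : ℤ) = Q * p l := by rw [hQ]; push_cast; ring
  have hQ_pos : (0 : ℤ) < Q := by
    have := hpos m
    rw [hQ] at this
    exact_mod_cast Nat.pos_of_mul_pos_left this
  rw [hQP] at hjm hkm ⊢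
  obtain ⟨n, hn0, hnQ, hn⟩ := exists_apply_add_mul_ne hQ_pos hjm hkm ⟨k, by ring⟩ hk hc
  exact ⟨n, hn0, mul_le_mul_of_nonneg_right (by omega) (by positivity), hn⟩

theorem eventually_isRecognitionWindow (hpos : ∀ l, 0 < p l)
    (hdvd : ∀ l, p l ∣ p (l + 1)) (hcover : ∀ j : ℤ, ∃ l, j ∈ perSet x (p l)) (l : ℕ) :
    ∀ᶠ m in atTop, IsRecognitionWindow x (p l) (p m) := by
  have hP : (0 : ℤ) < p l := by exact_mod_cast hpos l
  have hres : ∀ᶠ m in atTop, ∀ r ∈ Set.Ico (0 : ℤ) (p l), r ∉ perSet x (p l) →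
      ∀ c, (p l : ℤ) ∣ c - r →
        ∃ n : ℤ, 0 ≤ n ∧ (n + 1) * p l ≤ (p m : ℤ) ∧ x (c + n * p l) ≠ x c :=
    (eventually_all_finite (Set.finite_Ico _ _)).mpr fun r _ =>
      eventually_imp_distrib_left.mpr (eventually_exists_apply_add_mul_ne hpos hdvd hcover)
  filter_upwards [hres] with m hm c hc
  by_contra hcP
  have hr_notMem : c % p l ∉ perSet x (p l) := fun h => hcP <| by
    convert add_mul_mem_perSet h (c / p l) using 1; rw [Int.emod_def]; ring
  obtain ⟨n, hn0, hnm, hne⟩ := hm _ ⟨Int.emod_nonneg _ hP.ne', Int.emod_lt_of_pos _ hP⟩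
    hr_notMem c ⟨c / p l, by rw [Int.emod_def]; ring⟩
  exact hne (hc n hn0 hnm)

end Toeplitz

open Toeplitz

theorem unique_residue_class_general
    {A : Type*} (x : ℤ → A) (p : ℕ → ℕ)
    (hpos : ∀ l, 0 < p l) (hdvd : ∀ l, p l ∣ p (l + 1))
    (hcover : ∀ j : ℤ, ∃ l, ∀ n : ℤ, x (j + n * (p l : ℤ)) = x j)
    (hess : ∀ l, ({j : ℤ | ∀ n : ℤ, x (j + n * (p l : ℤ)) = x j}).Nonempty ∧
      ∀ q : ℕ, 0 < q → q < p l →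
        {j : ℤ | ∀ n : ℤ, x (j + n * (p l : ℤ)) = x j} ≠
          {j : ℤ | ∀ n : ℤ, x (j + n * (q : ℤ)) = x j}) :
    ∀ l₁ : ℕ, ∃ l₂ : ℕ, ∀ j₁ j₂ : ℤ,
      (∀ i : ℤ, 0 ≤ i → i < (p l₂ : ℤ) → x (j₁ + i) = x (j₂ + i)) →
      (p l₁ : ℤ) ∣ (j₁ - j₂) := by
  intro l₁
  obtain ⟨M, hW, hl₁M⟩ := ((eventually_isRecognitionWindow hpos hdvd hcover l₁).and
    (eventually_ge_atTop l₁)).exists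
  refine ⟨M, fun j₁ j₂ hw => ?_⟩
  have hP : (0 : ℤ) < p l₁ := by exact_mod_cast hpos l₁
  have hPM : (p l₁ : ℤ) ≤ p M := by
    exact_mod_cast Nat.le_of_dvd (hpos M) (Nat.rel_of_forall_rel_succ_of_le _ hdvd hl₁M)
  have h₁₂ := hW.isPeriodOn_sub hP hPM hw
  have h₂₁ := hW.isPeriodOn_sub hP hPM fun i h0 hi => (hw i h0 hi).symm
  rw [← neg_sub] at h₂₁
  exact dvd_of_isPeriodOn_perSet (hpos l₁) (hess l₁).2 h₁₂ h₂₁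

/-- Unique residue class lemma: for a non-periodic Toeplitz word with period structure
(p_l), for every l₁ there is l₂ such that any two occurrences of a word of length
p_{l₂} lie in the same residue class modulo p_{l₁}. -/
theorem unique_residue_class
    {A : Type*} [Fintype A] (x : ℤ → A) (p : ℕ → ℕ)
    (hpos : ∀ l, 0 < p l) (hdvd : ∀ l, p l ∣ p (l + 1))
    (hcover : ∀ j : ℤ, ∃ l, ∀ n : ℤ, x (j + n * (p l : ℤ)) = x j)
    (hess : ∀ l, ({j : ℤ | ∀ n : ℤ, x (j + n * (p l : ℤ)) = x j}).Nonempty ∧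
      ∀ q : ℕ, 0 < q → q < p l →
        {j : ℤ | ∀ n : ℤ, x (j + n * (p l : ℤ)) = x j} ≠
          {j : ℤ | ∀ n : ℤ, x (j + n * (q : ℤ)) = x j})
    (hnp : ¬ ∃ q : ℕ, 0 < q ∧ ∀ j : ℤ, x (j + (q : ℤ)) = x j) :
    ∀ l₁ : ℕ, ∃ l₂ : ℕ, ∀ j₁ j₂ : ℤ,
      (∀ i : ℤ, 0 ≤ i → i < (p l₂ : ℤ) → x (j₁ + i) = x (j₂ + i)) →
      (p l₁ : ℤ) ∣ (j₁ - j₂) :=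
  unique_residue_class_general x p hpos hdvd hcover hess
end

section
/- Let x be a generalised Oxtoby sequence with respect to a period structure (p_l). Then for every l ∈ ℕ and every k ∈ ℤ, the interval [k p_l, (k+1) p_l − 1] contains at least 2^l elements of Aper(p_l, x). -/
/-!
Since `Aper(q, x)` is invariant under translation by `q`, every block `[k q, (k+1) q)` contains
as many `q`-holes as `[0, q)`. The two nonempty sub-blocks of length `p l` given by (ii) are
disjoint and lie in `[0, p (l+1))`, and by (i) each of them carries all `p l`-holes of its block,
hence at least `2^l` of them by induction (at least one when `l = 0`, being nonempty).
This doubles the count at every level.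
-/

/-- The set of positions of x that are not q-periodic. -/
def AperSet {A : Type*} (x : ℤ → A) (q : ℕ) : Set ℤ :=
  {j : ℤ | ¬ ∀ n : ℤ, x (j + n * (q : ℤ)) = x j}

open Set Function

def block (q : ℕ) (k : ℤ) : Set ℤ :=
  Ico (k * q) ((k + 1) * q)

theorem pairwise_disjoint_block (q : ℕ) : Pairwise (Disjoint on fun k => block q k) := by
  simpa [block, smul_eq_mul, add_mul] using pairwise_disjoint_Ico_add_zsmul (0 : ℤ) (q : ℤ)

theorem block_subset_Ico_zero {P q k : ℕ} (hk : k < q / P) : block P k ⊆ Ico 0 (q : ℤ) := by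
  have hle : (k + 1) * P ≤ q := (Nat.mul_le_mul_right P hk).trans (Nat.div_mul_le_self q P)
  intro j ⟨hj₀, hj₁⟩
  refine ⟨le_trans (by positivity) hj₀, hj₁.trans_le ?_⟩
  exact_mod_cast hle

theorem two_mul_le_ncard_of_two_blocks (S : Set ℤ) {P q k₁ k₂ m : ℕ}
    (hk₁ : k₁ < q / P) (hk₂ : k₂ < q / P) (hne : k₁ ≠ k₂)
    (h₁ : m ≤ (S ∩ block P k₁).ncard) (h₂ : m ≤ (S ∩ block P k₂).ncard) :
    2 * m ≤ (S ∩ Ico 0 (q : ℤ)).ncard := by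
  have hdisj : Disjoint (S ∩ block P k₁) (S ∩ block P k₂) :=
    ((pairwise_disjoint_block P (by exact_mod_cast hne)).mono inter_subset_right
      inter_subset_right)
  have hsub : (S ∩ block P k₁) ∪ (S ∩ block P k₂) ⊆ S ∩ Ico 0 (q : ℤ) := by
    rw [← inter_union_distrib_left]
    exact inter_subset_inter_right S
      (union_subset (block_subset_Ico_zero hk₁) (block_subset_Ico_zero hk₂))
  have hfin : ∀ k : ℤ, (S ∩ block P k).Finite := fun k => (finite_Ico _ _).inter_of_right S
  calc 2 * m ≤ (S ∩ block P k₁).ncard + (S ∩ block P k₂).ncard := by omega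
    _ = ((S ∩ block P k₁) ∪ (S ∩ block P k₂)).ncard :=
      (ncard_union_eq hdisj (hfin _) (hfin _)).symm
    _ ≤ (S ∩ Ico 0 (q : ℤ)).ncard := ncard_le_ncard hsub ((finite_Ico _ _).inter_of_right S)

section AperSet

variable {A : Type*} (x : ℤ → A)

theorem add_mul_mem_aperSet_iff (q : ℕ) (j t : ℤ) :
    j + t * q ∈ AperSet x q ↔ j ∈ AperSet x q := by
  have hper : ∀ i s : ℤ, (∀ n : ℤ, x (i + n * q) = x i) →
      ∀ n : ℤ, x (i + s * q + n * q) = x (i + s * q) := by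
    intro i s hi n
    rw [add_assoc, ← add_mul, hi, hi]
  refine not_congr ⟨fun h => ?_, hper j t⟩
  simpa [add_assoc, ← add_mul] using hper (j + t * q) (-t) h

theorem image_add_mul_aperSet (q : ℕ) (t : ℤ) :
    (· + t * q) '' AperSet x q = AperSet x q := by
  ext j
  rw [image_add_right, mem_preimage, ← add_mul_mem_aperSet_iff x q _ t]
  simp

theorem ncard_aperSet_inter_block (q : ℕ) (k : ℤ) :
    (AperSet x q ∩ block q k).ncard = (AperSet x q ∩ Ico 0 (q : ℤ)).ncard := by
  rw [← ncard_image_of_injective (AperSet x q ∩ Ico 0 (q : ℤ)) (add_left_injective (k * q)),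
    image_inter (add_left_injective _), image_add_mul_aperSet, image_add_const_Ico]
  simp only [block, zero_add, add_mul, one_mul, add_comm (q : ℤ)]

end AperSet

section Oxtoby

variable {A : Type*} {x : ℤ → A}

theorem two_mul_le_ncard_aperSet_inter_block {q₀ q₁ m : ℕ}
    (htwo : ∃ k₁ k₂ : ℕ, k₁ < q₁ / q₀ ∧ k₂ < q₁ / q₀ ∧ k₁ ≠ k₂ ∧
      (AperSet x q₁ ∩ block q₀ k₁).Nonempty ∧ (AperSet x q₁ ∩ block q₀ k₂).Nonempty)
    (hm : ∀ k : ℕ, k < q₁ / q₀ → (AperSet x q₁ ∩ block q₀ k).Nonempty →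
      m ≤ (AperSet x q₁ ∩ block q₀ k).ncard)
    (k : ℤ) : 2 * m ≤ (AperSet x q₁ ∩ block q₁ k).ncard := by
  obtain ⟨k₁, k₂, hk₁, hk₂, hne, h₁, h₂⟩ := htwo
  rw [ncard_aperSet_inter_block]
  exact two_mul_le_ncard_of_two_blocks _ hk₁ hk₂ hne (hm k₁ hk₁ h₁) (hm k₂ hk₂ h₂)

theorem two_pow_le_ncard_aperSet_inter_block_of_nonempty {p : ℕ → ℕ}
    (hox1 : ∀ l : ℕ, ∀ k : ℕ, k < p (l + 1) / p l →
      AperSet x (p (l + 1)) ∩ block (p l) k = ∅ ∨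
      AperSet x (p (l + 1)) ∩ block (p l) k = AperSet x (p l) ∩ block (p l) k)
    (hox2 : ∀ l : ℕ, ∃ k₁ k₂ : ℕ, k₁ < p (l + 1) / p l ∧ k₂ < p (l + 1) / p l ∧ k₁ ≠ k₂ ∧
      (AperSet x (p (l + 1)) ∩ block (p l) k₁).Nonempty ∧
      (AperSet x (p (l + 1)) ∩ block (p l) k₂).Nonempty)
    (l k : ℕ) (hk : k < p (l + 1) / p l)
    (hne : (AperSet x (p (l + 1)) ∩ block (p l) k).Nonempty) :
    2 ^ l ≤ (AperSet x (p (l + 1)) ∩ block (p l) k).ncard := by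
  induction l generalizing k with
  | zero => exact (ncard_pos ((finite_Ico _ _).inter_of_right _)).mpr hne
  | succ l ih =>
    rcases hox1 (l + 1) k hk with hempty | heq
    · exact absurd hempty hne.ne_empty
    · rw [heq, pow_succ, mul_comm]
      exact two_mul_le_ncard_aperSet_inter_block (hox2 l) (ih ·) k

end Oxtoby

theorem oxtoby_holes_lower_bound_general
    {A : Type*} (x : ℤ → A) (p : ℕ → ℕ)
    (hox1 : ∀ l : ℕ, ∀ k : ℕ, k < p (l + 1) / p l →
      AperSet x (p (l + 1)) ∩ Set.Ico ((k : ℤ) * (p l : ℤ)) (((k : ℤ) + 1) * (p l : ℤ)) = ∅ ∨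
      AperSet x (p (l + 1)) ∩ Set.Ico ((k : ℤ) * (p l : ℤ)) (((k : ℤ) + 1) * (p l : ℤ)) =
        AperSet x (p l) ∩ Set.Ico ((k : ℤ) * (p l : ℤ)) (((k : ℤ) + 1) * (p l : ℤ)))
    (hox2 : ∀ l : ℕ, ∃ k₁ k₂ : ℕ, k₁ < p (l + 1) / p l ∧ k₂ < p (l + 1) / p l ∧ k₁ ≠ k₂ ∧
      (AperSet x (p (l + 1)) ∩
        Set.Ico ((k₁ : ℤ) * (p l : ℤ)) (((k₁ : ℤ) + 1) * (p l : ℤ))).Nonempty ∧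
      (AperSet x (p (l + 1)) ∩
        Set.Ico ((k₂ : ℤ) * (p l : ℤ)) (((k₂ : ℤ) + 1) * (p l : ℤ))).Nonempty) :
    ∀ l : ℕ, 1 ≤ l → ∀ k : ℤ,
      2 ^ l ≤ (AperSet x (p l) ∩ Set.Ico (k * (p l : ℤ)) ((k + 1) * (p l : ℤ))).ncard := by
  rintro (_ | l) hl k
  · omega
  · rw [pow_succ, mul_comm]
    exact two_mul_le_ncard_aperSet_inter_block (hox2 l)
      (two_pow_le_ncard_aperSet_inter_block_of_nonempty hox1 hox2 l) k

/-- In a generalised Oxtoby sequence, every interval [k p_l, (k+1) p_l − 1]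
contains at least 2^l many p_l-holes. -/
theorem oxtoby_holes_lower_bound
    {A : Type*} [Fintype A] (x : ℤ → A) (p : ℕ → ℕ)
    (hp0 : p 0 = 1) (hpos : ∀ l, 0 < p l) (hdvd : ∀ l, p l ∣ p (l + 1))
    (hcover : ∀ j : ℤ, ∃ l, ∀ n : ℤ, x (j + n * (p l : ℤ)) = x j)
    (hox1 : ∀ l : ℕ, ∀ k : ℕ, k < p (l + 1) / p l →
      AperSet x (p (l + 1)) ∩ Set.Ico ((k : ℤ) * (p l : ℤ)) (((k : ℤ) + 1) * (p l : ℤ)) = ∅ ∨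
      AperSet x (p (l + 1)) ∩ Set.Ico ((k : ℤ) * (p l : ℤ)) (((k : ℤ) + 1) * (p l : ℤ)) =
        AperSet x (p l) ∩ Set.Ico ((k : ℤ) * (p l : ℤ)) (((k : ℤ) + 1) * (p l : ℤ)))
    (hox2 : ∀ l : ℕ, ∃ k₁ k₂ : ℕ, k₁ < p (l + 1) / p l ∧ k₂ < p (l + 1) / p l ∧ k₁ ≠ k₂ ∧
      (AperSet x (p (l + 1)) ∩
        Set.Ico ((k₁ : ℤ) * (p l : ℤ)) (((k₁ : ℤ) + 1) * (p l : ℤ))).Nonempty ∧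
      (AperSet x (p (l + 1)) ∩
        Set.Ico ((k₂ : ℤ) * (p l : ℤ)) (((k₂ : ℤ) + 1) * (p l : ℤ))).Nonempty) :
    ∀ l : ℕ, 1 ≤ l → ∀ k : ℤ,
      2 ^ l ≤ (AperSet x (p l) ∩ Set.Ico (k * (p l : ℤ)) ((k + 1) * (p l : ℤ))).ncard :=
  oxtoby_holes_lower_bound_general x p hox1 hox2
end

section
/- More generally, if a Toeplitz word x with period structure (p_l) satisfies |Aper(p_l, x) ∩ [0, p_l − 1]| ≤ h for all l and some fixed h ∈ ℕ, then liminf_{L→∞} p_x(L)/L ≤ |A|^h, so x has non-superlinear complexity. -/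
/-- Word complexity: the number of distinct factors of length L of x. -/
noncomputable def cplx {A : Type*} (x : ℤ → A) (L : ℕ) : ℕ :=
  (Set.range fun j : ℤ => fun i : Fin L => x (j + ((i : ℕ) : ℤ))).ncard

lemma key_cplx_bound {A : Type*} [Fintype A] (x : ℤ → A) (q : ℕ) (hq : 0 < q) (h : ℕ)
    (hbd : (AperSet x q ∩ Set.Ico (0 : ℤ) (q : ℤ)).ncard ≤ h) :
    cplx x q ≤ q * Fintype.card A ^ h := by
  classical
  have hqz : (0 : ℤ) < (q : ℤ) := by exact_mod_cast hq
  set S : Set ℤ := AperSet x q ∩ Set.Ico (0 : ℤ) (q : ℤ) with hS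
  have hSfin : S.Finite := (Set.finite_Ico _ _).subset Set.inter_subset_right
  set Sf : Finset ℤ := hSfin.toFinset with hSf
  have hmemS : ∀ m : ℤ, m ∈ Sf ↔ m ∈ S := fun m => hSfin.mem_toFinset
  have hcard : Sf.card ≤ h := by
    rwa [Set.ncard_eq_toFinset_card _ hSfin] at hbd
  -- the coding map
  let T := Fin q × (Sf → A)
  let F : T → (Fin q → A) := fun rg i =>
    if hm : (((rg.1 : ℕ) : ℤ) + ((i : ℕ) : ℤ)) % (q : ℤ) ∈ Sf then
      rg.2 ⟨_, hm⟩ else x ((((rg.1 : ℕ) : ℤ) + ((i : ℕ) : ℤ)) % (q : ℤ))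
  let φ : ℤ → T := fun j =>
    (⟨(j % (q : ℤ)).toNat, by
        have h1 := Int.emod_nonneg j (ne_of_gt hqz)
        have h2 := Int.emod_lt_of_pos j hqz
        omega⟩,
     fun s => x (j + ((s : ℤ) - j) % (q : ℤ)))
  have hfac : ∀ j : ℤ, (fun i : Fin q => x (j + ((i : ℕ) : ℤ))) = F (φ j) := by
    intro j
    funext i
    have h1 := Int.emod_nonneg j (ne_of_gt hqz)
    have hi0 : (0 : ℤ) ≤ ((i : ℕ) : ℤ) := by positivity
    have hiq : ((i : ℕ) : ℤ) < (q : ℤ) := by exact_mod_cast i.2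
    have hval : (((φ j).1 : ℕ) : ℤ) = j % (q : ℤ) := by
      simp [φ, Int.toNat_of_nonneg h1]
    have hmji : ((((φ j).1 : ℕ) : ℤ) + ((i : ℕ) : ℤ)) % (q : ℤ)
        = (j + ((i : ℕ) : ℤ)) % (q : ℤ) := by
      rw [hval, Int.emod_add_emod]
    set m : ℤ := ((((φ j).1 : ℕ) : ℤ) + ((i : ℕ) : ℤ)) % (q : ℤ) with hmdef
    have hm0 : 0 ≤ m := Int.emod_nonneg _ (ne_of_gt hqz)
    have hmq : m < (q : ℤ) := Int.emod_lt_of_pos _ hqz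
    -- q divides (j + i) - m
    have hdvd : (q : ℤ) ∣ (j + ((i : ℕ) : ℤ)) - m := by
      rw [hmji]
      exact Int.dvd_self_sub_of_emod_eq rfl
    show x (j + ((i : ℕ) : ℤ)) = F (φ j) i
    by_cases hm : m ∈ Sf
    · -- hole case
      have hgoal : F (φ j) i = x (j + (m - j) % (q : ℤ)) := by
        simp only [F, hmdef]
        rw [dif_pos hm]
      rw [hgoal]
      congr 2
      rw [hmji, Int.sub_emod, Int.emod_emod_of_dvd _ dvd_rfl, ← Int.sub_emod,
        add_sub_cancel_left, Int.emod_eq_of_lt hi0 hiq]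
    · -- periodic case
      have hgoal : F (φ j) i = x m := by
        simp only [F, hmdef]
        rw [dif_neg hm]
      rw [hgoal]
      have hmS : m ∉ S := fun hc => hm ((hmemS m).mpr hc)
      have hmper : ∀ n : ℤ, x (m + n * (q : ℤ)) = x m := by
        by_contra hc
        exact hmS ⟨hc, hm0, hmq⟩
      obtain ⟨c, hc⟩ := hdvd
      have : j + ((i : ℕ) : ℤ) = m + c * (q : ℤ) := by linarith [hc]
      rw [this, hmper c]
  have hA : 1 ≤ Fintype.card A := Fintype.card_pos_iff.mpr ⟨x 0⟩
  have step1 : cplx x q ≤ (Set.range F).ncard := by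
    apply Set.ncard_le_ncard _ (Set.finite_range F)
    rintro f ⟨j, rfl⟩
    exact ⟨φ j, (hfac j).symm⟩
  have step2 : (Set.range F).ncard ≤ Fintype.card T := by
    rw [← Set.image_univ]
    have := Set.ncard_image_le (s := (Set.univ : Set T)) (f := F) Set.finite_univ
    rwa [Set.ncard_univ, Nat.card_eq_fintype_card] at this
  have step3 : Fintype.card T = q * Fintype.card A ^ Sf.card := by
    simp [T, Fintype.card_fun]
  calc cplx x q ≤ Fintype.card T := step1.trans step2
    _ = q * Fintype.card A ^ Sf.card := step3
    _ ≤ q * Fintype.card A ^ h :=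
      Nat.mul_le_mul_left q (Nat.pow_le_pow_right hA hcard)


lemma p_dvd_chain (p : ℕ → ℕ) (hdvd : ∀ l, p l ∣ p (l + 1)) :
    ∀ a b, a ≤ b → p a ∣ p b := by
  intro a b hab
  induction b, hab using Nat.le_induction with
  | base => exact dvd_rfl
  | succ n hn ih => exact ih.trans (hdvd n)

/-- A Toeplitz word with at most h holes per period has non-superlinear complexity:
liminf p_x(L)/L ≤ |A|^h. -/
theorem bounded_holes_nonsuperlinear_complexity
    {A : Type*} [Fintype A] (x : ℤ → A) (p : ℕ → ℕ) (h : ℕ)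
    (hpos : ∀ l, 0 < p l) (hdvd : ∀ l, p l ∣ p (l + 1))
    (hcover : ∀ j : ℤ, ∃ l, ∀ n : ℤ, x (j + n * (p l : ℤ)) = x j)
    (hess : ∀ l, ({j : ℤ | ∀ n : ℤ, x (j + n * (p l : ℤ)) = x j}).Nonempty ∧
      ∀ q : ℕ, 0 < q → q < p l →
        {j : ℤ | ∀ n : ℤ, x (j + n * (p l : ℤ)) = x j} ≠
          {j : ℤ | ∀ n : ℤ, x (j + n * (q : ℤ)) = x j})
    (hnp : ¬ ∃ q : ℕ, 0 < q ∧ ∀ j : ℤ, x (j + (q : ℤ)) = x j)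
    (hbd : ∀ l, (AperSet x (p l) ∩ Set.Ico (0 : ℤ) (p l : ℤ)).ncard ≤ h) :
    Filter.liminf (fun L : ℕ => (cplx x L : ℝ) / (L : ℝ)) Filter.atTop ≤
      ((Fintype.card A : ℝ)) ^ h := by
  -- p is unbounded
  have punbd : ∀ N : ℕ, ∃ l, N ≤ p l := by
    by_contra hc
    push_neg at hc
    obtain ⟨N, hN⟩ := hc
    have hbdd : BddAbove (Set.range p) := ⟨N, by rintro _ ⟨l, rfl⟩; exact (hN l).le⟩
    have hne : (Set.range p).Nonempty := ⟨p 0, 0, rfl⟩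
    obtain ⟨l₀, hl₀⟩ := Nat.sSup_mem hne hbdd
    have hM : ∀ l, p l ∣ p l₀ := by
      intro l
      have h1 : p l ∣ p (max l l₀) := p_dvd_chain p hdvd _ _ (le_max_left _ _)
      have h2 : p (max l l₀) = p l₀ := by
        apply le_antisymm
        · rw [hl₀]; exact le_csSup hbdd ⟨max l l₀, rfl⟩
        · exact Nat.le_of_dvd (hpos _) (p_dvd_chain p hdvd _ _ (le_max_right _ _))
      rwa [h2] at h1
    apply hnp
    refine ⟨p l₀, hpos l₀, fun j => ?_⟩
    obtain ⟨l, hl⟩ := hcover j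
    obtain ⟨c, hc⟩ := hM l
    have hcast : j + (p l₀ : ℤ) = j + (c : ℤ) * (p l : ℤ) := by push_cast [hc]; ring
    rw [hcast, hl c]
  -- conclude via frequent values at L = p l
  apply Filter.liminf_le_of_frequently_le
  · rw [Filter.frequently_atTop]
    intro N
    obtain ⟨l, hl⟩ := punbd N
    refine ⟨p l, hl, ?_⟩
    have hplpos : (0 : ℝ) < (p l : ℝ) := by exact_mod_cast hpos l
    rw [div_le_iff₀ hplpos]
    calc (cplx x (p l) : ℝ) ≤ ((p l * Fintype.card A ^ h : ℕ) : ℝ) := by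
          exact_mod_cast key_cplx_bound x (p l) (hpos l) h (hbd l)
      _ = (Fintype.card A : ℝ) ^ h * (p l : ℝ) := by push_cast; ring
  · exact Filter.isBoundedUnder_of ⟨0, fun L => by positivity⟩
end

section
/- Let X be an almost automorphic subshift with factor map π to its maximal equicontinuous factor and separating-cover boundary B_X. Suppose ω satisfies: the orbit {R^j ω : j ∈ ℤ} meets B_X in an infinite set, and the fiber π⁻¹(ω) is finite. Then there exist x, y ∈ π⁻¹(ω) with x ≠ y such that the set {j ∈ ℤ : x(j) ≠ y(j)} is infinite; in particular X contains a proximal pair of orbits that is not two-sided asymptotic. -/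
theorem Set.Finite.exists_infinite_of_infinite_biUnion {ι α : Type*} {s : Set ι} (hs : s.Finite)
    {t : ι → Set α} (h : (⋃ i ∈ s, t i).Infinite) : ∃ i ∈ s, (t i).Infinite := by
  by_contra! hfin
  exact h (hs.biUnion hfin)

theorem infinite_boundary_orbit_finite_fiber_general
    {A : Type*} {Ω : Type*} [AddCommGroup Ω]
    (X : Set (ℤ → A)) (π : (ℤ → A) → Ω) (g₀ : Ω) (B : Set Ω) (ω : Ω)
    (hfib : {x ∈ X | π x = ω}.Finite)
    (hchar : {j : ℤ | ω + j • g₀ ∈ B} =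
      ⋃ x ∈ {x ∈ X | π x = ω}, ⋃ y ∈ {x ∈ X | π x = ω}, {j : ℤ | x j ≠ y j})
    (hinf : {j : ℤ | ω + j • g₀ ∈ B}.Infinite) :
    ∃ x ∈ X, ∃ y ∈ X, π x = ω ∧ π y = ω ∧ x ≠ y ∧ {j : ℤ | x j ≠ y j}.Infinite := by
  rw [hchar] at hinf
  obtain ⟨x, ⟨hxX, hx⟩, hinf⟩ := hfib.exists_infinite_of_infinite_biUnion hinf
  obtain ⟨y, ⟨hyX, hy⟩, hxy⟩ := hfib.exists_infinite_of_infinite_biUnion hinf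
  refine ⟨x, hxX, y, hyX, hx, hy, ?_, hxy⟩
  rintro rfl
  simp at hxy

/-- If the orbit of ω meets the boundary in an infinite set while the fiber over ω is
finite, then two distinct elements of the fiber differ in infinitely many positions
(yielding a proximal pair of orbits that is not two-sided asymptotic). -/
theorem infinite_boundary_orbit_finite_fiber
    {A : Type*} [Fintype A] {Ω : Type*} [AddCommGroup Ω]
    (X : Set (ℤ → A)) (π : (ℤ → A) → Ω) (g₀ : Ω) (B : Set Ω) (ω : Ω)
    (hfib : {x ∈ X | π x = ω}.Finite)
    (hchar : {j : ℤ | ω + j • g₀ ∈ B} =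
      ⋃ x ∈ {x ∈ X | π x = ω}, ⋃ y ∈ {x ∈ X | π x = ω}, {j : ℤ | x j ≠ y j})
    (hinf : {j : ℤ | ω + j • g₀ ∈ B}.Infinite) :
    ∃ x ∈ X, ∃ y ∈ X, π x = ω ∧ π y = ω ∧ x ≠ y ∧ {j : ℤ | x j ≠ y j}.Infinite :=
  infinite_boundary_orbit_finite_fiber_general X π g₀ B ω hfib hchar hinf
end
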